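/- Let P, Q ∈ ℝ[[x,y]] and let X = P ∂/∂x + Q ∂/∂y. Consider the set S of separatrix branches of the complexification of X: equivalence classes, modulo reparametrization by formal diffeomorphisms φ ∈ ℂ[[t]] (φ(0)=0, φ'(0) ≠ 0), of primitive parametrizations γ = (x(t),y(t)) with x(t),y(t) ∈ ℂ[[t]] of positive order, not both zero, satisfying (P∘γ)·y'(t) − (Q∘γ)·x'(t) = 0. If S is finite and has odd cardinality, then X admits a real formal separatrix: a primitive parametrization γ = (x(t),y(t)) with x(t),y(t) ∈ ℝ[[t]] of positive order, not both zero, satisfying (P∘γ)·y'(t) − (Q∘γ)·x'(t) = 0. -/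

import Mathlib

open PowerSeries

/-- Coefficientwise complex conjugation on two-variable formal power series, `P ↦ P^∨`. -/
noncomputable def mvConj : MvPowerSeries (Fin 2) ℂ → MvPowerSeries (Fin 2) ℂ :=
  MvPowerSeries.map (starRingEnd ℂ)

/-- Coefficientwise complex conjugation on one-variable formal power series, `g ↦ g^∨`. -/
noncomputable def psConj : PowerSeries ℂ → PowerSeries ℂ :=
  PowerSeries.map (starRingEnd ℂ)

/-- Substitution `P ∘ (a(t), b(t))` of a pair of one-variable formal power series with zero
constant term into a two-variable formal power series `P(x,y)`.  (For `a, b` of positive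
order, the coefficient of `t^n` only involves monomials `x^i y^j` of `P` with `i + j ≤ n`,
so the finite sum below computes the substitution.) -/
noncomputable def substPair (P : MvPowerSeries (Fin 2) ℂ) (a b : PowerSeries ℂ) :
    PowerSeries ℂ :=
  PowerSeries.mk fun n =>
    ∑ i ∈ Finset.range (n + 1), ∑ j ∈ Finset.range (n + 1),
      MvPowerSeries.coeff (Finsupp.single 0 i + Finsupp.single 1 j) P *
        PowerSeries.coeff n (a ^ i * b ^ j)

/-- Substitution `g(h(t))` of a one-variable formal power series `h` with zero constant
term into a one-variable formal power series `g`. -/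
noncomputable def substOne (g h : PowerSeries ℂ) : PowerSeries ℂ :=
  PowerSeries.mk fun n =>
    ∑ i ∈ Finset.range (n + 1),
      PowerSeries.coeff i g * PowerSeries.coeff n (h ^ i)

/-- A pair `(x(t), y(t))` is a primitive parametrization if it cannot be written as
`(x̃(h(t)), ỹ(h(t)))` for some pair `(x̃, ỹ)` and some `h` of order at least `2`. -/
def Primitive (x y : PowerSeries ℂ) : Prop :=
  ¬ ∃ (x' y' h : PowerSeries ℂ), 2 ≤ h.order ∧ x = substOne x' h ∧ y = substOne y' h

/-- The coefficientwise inclusion `ℝ[[x,y]] → ℂ[[x,y]]` (complexification). -/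
noncomputable def complexify : MvPowerSeries (Fin 2) ℝ → MvPowerSeries (Fin 2) ℂ :=
  MvPowerSeries.map Complex.ofRealHom

/-- `γ = (x(t), y(t))` is a primitive formal separatrix parametrization of the vector
field `X = P ∂/∂x + Q ∂/∂y`: `x, y` have positive order, are not both zero, `γ` is
primitive, and `(P∘γ)·y' − (Q∘γ)·x' = 0`. -/
def IsSepParam (P Q : MvPowerSeries (Fin 2) ℂ) (γ : PowerSeries ℂ × PowerSeries ℂ) :
    Prop :=
  PowerSeries.coeff 0 γ.1 = 0 ∧ PowerSeries.coeff 0 γ.2 = 0 ∧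
    ¬(γ.1 = 0 ∧ γ.2 = 0) ∧ Primitive γ.1 γ.2 ∧
    substPair P γ.1 γ.2 * PowerSeries.derivativeFun γ.2
      - substPair Q γ.1 γ.2 * PowerSeries.derivativeFun γ.1 = 0

/-- Two parametrizations define the same branch when one is obtained from the other by
substituting a formal diffeomorphism `φ` (`φ(0) = 0`, `φ'(0) ≠ 0`). -/
def Reparam (γ δ : PowerSeries ℂ × PowerSeries ℂ) : Prop :=
  ∃ φ : PowerSeries ℂ, PowerSeries.coeff 0 φ = 0 ∧ PowerSeries.coeff 1 φ ≠ 0 ∧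
    δ.1 = substOne γ.1 φ ∧ δ.2 = substOne γ.2 φ

/-!
Since `P` and `Q` are real, complex conjugation permutes the separatrix branches, and it is an
involution; on a set of odd cardinality it has a fixed branch, i.e. a parametrization `γ` with
`γ̄ ∘ φ = γ` for some formal diffeomorphism `φ`. Conjugating this identity gives
`γ ∘ (φ̄ ∘ φ) = γ`. The linear coefficient of `φ̄ ∘ φ` is `|φ'(0)|² > 0`, and a nonzero series
of positive order is fixed only by reparametrizations whose linear coefficient is a root of
unity, and by no reparametrization tangent to the identity other than `X`; hence
`φ̄ ∘ φ = X`. For suitable `c ∈ ℂ` the series `v = c X + c̄ φ` is a diffeomorphism with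
`v̄ ∘ φ = v`, and then `γ ∘ v⁻¹` is real.
-/

namespace PowerSeries

variable {R : Type*} [CommRing R]

theorem X_pow_dvd_pow_of_constantCoeff_eq_zero {a : R⟦X⟧} (ha : constantCoeff a = 0) (d : ℕ) :
    X ^ d ∣ a ^ d :=
  pow_dvd_pow_of_dvd (X_dvd_iff.mpr ha) d

theorem order_toNat_ne_zero {f : R⟦X⟧} (hf₀ : constantCoeff f = 0) (hf : f ≠ 0) :
    f.order.toNat ≠ 0 :=
  (ENat.toNat_pos (order_ne_zero_iff_constCoeff_eq_zero.mpr hf₀) (order_eq_top.not.mpr hf)).ne'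

theorem constantCoeff_subst_of_constantCoeff_eq_zero {a : R⟦X⟧} (ha : constantCoeff a = 0)
    (f : R⟦X⟧) : constantCoeff (subst a f) = constantCoeff f := by
  rw [← coeff_zero_eq_constantCoeff_apply, coeff_subst' (HasSubst.of_constantCoeff_zero' ha),
    finsum_eq_single _ 0 fun d hd => by
      rw [X_pow_dvd_iff.mp (X_pow_dvd_pow_of_constantCoeff_eq_zero ha d) 0 (Nat.pos_of_ne_zero hd),
        smul_zero]]
  simp

theorem coeff_one_subst_of_constantCoeff_eq_zero {a : R⟦X⟧} (ha : constantCoeff a = 0)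
    (f : R⟦X⟧) : coeff 1 (subst a f) = coeff 1 f * coeff 1 a := by
  rw [coeff_subst' (HasSubst.of_constantCoeff_zero' ha), finsum_eq_single _ 1]
  · simp
  · intro d hd
    rcases Nat.lt_or_gt_of_ne hd with h | h
    · obtain rfl : d = 0 := by omega
      simp
    · rw [X_pow_dvd_iff.mp (X_pow_dvd_pow_of_constantCoeff_eq_zero ha d) 1 h, smul_zero]

theorem X_pow_dvd_subst_sub_subst {a b : R⟦X⟧} (ha : HasSubst a) (hb : HasSubst b) {k : ℕ}
    (hab : X ^ k ∣ a - b) (f : R⟦X⟧) : X ^ k ∣ subst a f - subst b f := by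
  refine X_pow_dvd_iff.mpr fun n hn => ?_
  rw [map_sub, coeff_subst' ha, coeff_subst' hb, sub_eq_zero]
  refine finsum_congr fun d => ?_
  rw [← sub_eq_zero, ← smul_sub, ← map_sub,
    X_pow_dvd_iff.mp (hab.trans (sub_dvd_pow_sub_pow a b d)) n hn, smul_zero]

section IsDomain

variable [IsDomain R]

theorem pow_mul_subst_divXPowOrder_of_subst_eq_self {f s : R⟦X⟧} (hf : subst (X * s) f = f) :
    s ^ f.order.toNat * subst (X * s) (divXPowOrder f) = divXPowOrder f := by
  have hXs : HasSubst (X * s) := HasSubst.of_constantCoeff_zero' (by simp)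
  refine mul_left_cancel₀ (pow_ne_zero f.order.toNat (X_ne_zero (R := R))) ?_
  calc X ^ f.order.toNat * (s ^ f.order.toNat * subst (X * s) (divXPowOrder f))
      = subst (X * s) (X ^ f.order.toNat * divXPowOrder f) := by
        rw [subst_mul hXs, subst_pow hXs, subst_X hXs]; ring
    _ = X ^ f.order.toNat * divXPowOrder f := by rw [X_pow_order_mul_divXPowOrder, hf]

theorem coeff_one_pow_order_eq_one {f a : R⟦X⟧} (ha : constantCoeff a = 0) (hf : f ≠ 0)
    (hfa : subst a f = f) : coeff 1 a ^ f.order.toNat = 1 := by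
  obtain ⟨s, rfl⟩ := X_dvd_iff.mpr ha
  have h := congrArg constantCoeff (pow_mul_subst_divXPowOrder_of_subst_eq_self hfa)
  rw [map_mul, map_pow, constantCoeff_subst_of_constantCoeff_eq_zero ha] at h
  rw [coeff_succ_X_mul, coeff_zero_eq_constantCoeff_apply]
  exact mul_eq_right₀ (constantCoeff_divXPowOrder_eq_zero_iff.not.mpr hf) |>.mp h

/-- Writing `a = X (1 + X ^ j v)` and `f = X ^ m g` with `v(0), g(0) ≠ 0`, the coefficient of
`X ^ (m + j)` in `f ∘ a - f` is `m v(0) g(0) ≠ 0`. -/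
theorem eq_X_of_subst_eq_self [CharZero R] {f a : R⟦X⟧} (ha : constantCoeff a = 0)
    (ha₁ : coeff 1 a = 1) (hf₀ : constantCoeff f = 0) (hf : f ≠ 0) (hfa : subst a f = f) :
    a = X := by
  obtain ⟨s, rfl⟩ := X_dvd_iff.mpr ha
  have hs₀ : constantCoeff (s - 1) = 0 := by
    rw [map_sub, ← coeff_zero_eq_constantCoeff_apply, ← coeff_succ_X_mul, ha₁, map_one, sub_self]
  by_contra hsX
  have hs : s - 1 ≠ 0 := fun h => hsX (by rw [sub_eq_zero.mp h, mul_one])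
  set j := (s - 1).order.toNat
  set v := divXPowOrder (s - 1)
  set m := f.order.toNat
  set g := divXPowOrder f
  have hv : constantCoeff v ≠ 0 := constantCoeff_divXPowOrder_eq_zero_iff.not.mpr hs
  have hg : constantCoeff g ≠ 0 := constantCoeff_divXPowOrder_eq_zero_iff.not.mpr hf
  have hjv : X ^ j * v = s - 1 := X_pow_order_mul_divXPowOrder
  obtain ⟨r, hr⟩ := sq_dvd_add_pow_sub_sub (X ^ j * v) 1 m
  have hsm : s ^ m = 1 + X ^ j * v * (m : R⟦X⟧) + (X ^ j * v) ^ 2 * r := by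
    rw [show s = 1 + X ^ j * v by rw [hjv]; ring]
    linear_combination hr
  set G := subst (X * s) g
  have hfix : s ^ m * G = g := pow_mul_subst_divXPowOrder_of_subst_eq_self hfa
  have hGg : g - G = X ^ j * (v * (m : R⟦X⟧) * G + X ^ j * v ^ 2 * r * G) := by
    rw [← hfix, hsm]
    ring
  have hdvd : X ^ j * X ∣ X ^ j * (v * (m : R⟦X⟧) * G + X ^ j * v ^ 2 * r * G) := by
    have hXs : X ^ (j + 1) ∣ X * s - X := by
      rw [pow_succ', ← mul_sub_one, ← hjv, ← mul_assoc]
      exact dvd_mul_right _ _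
    have h := X_pow_dvd_subst_sub_subst (HasSubst.of_constantCoeff_zero' ha) HasSubst.X' hXs g
    rwa [X_subst, ← neg_sub, dvd_neg, hGg, pow_succ] at h
  have h0 := X_dvd_iff.mp ((mul_dvd_mul_iff_left (pow_ne_zero j X_ne_zero)).mp hdvd)
  have hj : j ≠ 0 := order_toNat_ne_zero hs₀ hs
  have hm : m ≠ 0 := order_toNat_ne_zero hf₀ hf
  simp [G, constantCoeff_subst_of_constantCoeff_eq_zero ha, hj, hm, hv, hg] at h0

end IsDomain

theorem exists_subst_inverse {K : Type*} [Field K] {φ : K⟦X⟧} (hφ₀ : constantCoeff φ = 0)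
    (hφ₁ : coeff 1 φ ≠ 0) :
    ∃ ψ : K⟦X⟧, constantCoeff ψ = 0 ∧ coeff 1 ψ ≠ 0 ∧ subst ψ φ = X ∧ subst φ ψ = X :=
  ⟨φ.substInvOfIsUnit hφ₁.isUnit, constantCoeff_substInvOfIsUnit _ _,
    by simp [coeff_one_substInvOfIsUnit, hφ₁], subst_substInvOfIsUnit_right _ hφ₀ _,
    subst_substInvOfIsUnit_left _ hφ₀ _⟩

theorem zero_subst {a : R⟦X⟧} (ha : HasSubst a) : subst a (0 : R⟦X⟧) = 0 := by
  rw [← coe_substAlgHom ha, map_zero]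

theorem subst_subst_eq_self {f φ ψ : R⟦X⟧} (hφ : HasSubst φ) (hψ : HasSubst ψ)
    (hφψ : subst ψ φ = X) : subst ψ (subst φ f) = f := by
  rw [subst_comp_subst_apply hφ hψ, hφψ, X_subst]

end PowerSeries

theorem Function.Involutive.exists_fixed_of_odd_card {α : Type*} {f : α → α}
    (hf : Function.Involutive f) (hodd : Odd (Nat.card α)) : ∃ a, f a = a := by
  classical
  have : Finite α := Nat.finite_of_card_ne_zero hodd.pos.ne'
  have : Fintype α := Fintype.ofFinite α
  let F : Function.End α := f
  have hF : F ^ 2 ^ 1 = 1 := funext hf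
  have hmod := Equiv.Perm.card_fixedPoints_modEq (p := 2) hF
  rw [Nat.card_eq_fintype_card] at hodd
  obtain ⟨⟨a, ha⟩⟩ : Nonempty (Function.fixedPoints F) := by
    rw [← Fintype.card_pos_iff]
    have := Nat.odd_iff.mp hodd
    unfold Nat.ModEq at hmod
    omega
  exact ⟨a, ha⟩

open ComplexConjugate

theorem substOne_eq_subst (g : ℂ⟦X⟧) {h : ℂ⟦X⟧} (h₀ : constantCoeff h = 0) :
    substOne g h = subst h g := by
  ext n
  rw [substOne, coeff_mk, coeff_subst' (HasSubst.of_constantCoeff_zero' h₀),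
    finsum_eq_sum_of_support_subset (s := Finset.range (n + 1))]
  · rfl
  · intro d hd
    contrapose! hd
    rw [Function.notMem_support, X_pow_dvd_iff.mp (X_pow_dvd_pow_of_constantCoeff_eq_zero h₀ d) n
      (by simpa using hd), smul_zero]

theorem substPair_eq_subst (P : MvPowerSeries (Fin 2) ℂ) {a b : ℂ⟦X⟧}
    (ha : constantCoeff a = 0) (hb : constantCoeff b = 0) :
    substPair P a b = MvPowerSeries.subst ![a, b] P := by
  have hab : MvPowerSeries.HasSubst ![a, b] :=
    MvPowerSeries.hasSubst_of_constantCoeff_zero (Fin.forall_fin_two.mpr ⟨ha, hb⟩)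
  have hprod (d : Fin 2 →₀ ℕ) : (d.prod fun s e => ![a, b] s ^ e) = a ^ d 0 * b ^ d 1 := by
    rw [Finsupp.prod_fintype _ _ (by simp), Fin.prod_univ_two]
    rfl
  let pairs : ℕ × ℕ → Fin 2 →₀ ℕ := fun p => Finsupp.single 0 p.1 + Finsupp.single 1 p.2
  have hpairs : Function.Injective pairs := fun p q h =>
    Prod.ext (by simpa [pairs] using DFunLike.congr_fun h 0)
      (by simpa [pairs] using DFunLike.congr_fun h 1)
  ext n
  rw [substPair, coeff_mk, PowerSeries.coeff, MvPowerSeries.coeff_subst hab,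
    finsum_eq_sum_of_support_subset
      (s := (Finset.range (n + 1) ×ˢ Finset.range (n + 1)).image pairs),
    Finset.sum_image hpairs.injOn, Finset.sum_product]
  · simp [pairs, hprod, smul_eq_mul]
  · intro d hd
    rw [Function.mem_support, hprod] at hd
    refine Finset.mem_coe.mpr (Finset.mem_image.mpr ⟨(d 0, d 1), ?_, ?_⟩)
    · simp only [Finset.mem_product, Finset.mem_range]
      by_contra h
      refine hd ?_
      change _ • coeff n _ = 0
      rcases not_and_or.mp h with h | h
      · rw [X_pow_dvd_iff.mp (dvd_mul_of_dvd_left (X_pow_dvd_pow_of_constantCoeff_eq_zero ha _) _)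
          n (by omega), smul_zero]
      · rw [X_pow_dvd_iff.mp (dvd_mul_of_dvd_right (X_pow_dvd_pow_of_constantCoeff_eq_zero hb _) _)
          n (by omega), smul_zero]
    · ext i; fin_cases i <;> simp [pairs]

theorem substPair_subst (P : MvPowerSeries (Fin 2) ℂ) {a b φ : ℂ⟦X⟧} (ha : constantCoeff a = 0)
    (hb : constantCoeff b = 0) (hφ : constantCoeff φ = 0) :
    subst φ (substPair P a b) = substPair P (subst φ a) (subst φ b) := by
  rw [substPair_eq_subst P ha hb, substPair_eq_subst P
    (by rwa [constantCoeff_subst_of_constantCoeff_eq_zero hφ])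
    (by rwa [constantCoeff_subst_of_constantCoeff_eq_zero hφ]), PowerSeries.subst,
    MvPowerSeries.subst_comp_subst_apply
      (MvPowerSeries.hasSubst_of_constantCoeff_zero (Fin.forall_fin_two.mpr ⟨ha, hb⟩))
      (HasSubst.of_constantCoeff_zero' hφ).const]
  congr 1
  ext i : 1
  fin_cases i <;> rfl

theorem derivativeFun_eq_derivative (f : ℂ⟦X⟧) : derivativeFun f = d⁄dX ℂ f := rfl

theorem coeff_psConj (n : ℕ) (f : ℂ⟦X⟧) : coeff n (psConj f) = conj (coeff n f) :=
  coeff_map _ _ _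

theorem psConj_involutive : Function.Involutive psConj := fun f => by
  ext n
  simp [coeff_psConj]

theorem constantCoeff_psConj (f : ℂ⟦X⟧) : constantCoeff (psConj f) = conj (constantCoeff f) := by
  rw [← coeff_zero_eq_constantCoeff_apply, coeff_psConj, coeff_zero_eq_constantCoeff_apply]

theorem psConj_X : psConj X = X := map_X _

theorem psConj_subst {f a : ℂ⟦X⟧} (ha : HasSubst a) :
    psConj (subst a f) = subst (psConj a) (psConj f) :=
  map_subst ha f

theorem psConj_derivative (f : ℂ⟦X⟧) : psConj (d⁄dX ℂ f) = d⁄dX ℂ (psConj f) := by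
  ext n
  simp [coeff_psConj, coeff_derivative]

theorem psConj_substPair_complexify (P : MvPowerSeries (Fin 2) ℝ) {a b : ℂ⟦X⟧}
    (ha : constantCoeff a = 0) (hb : constantCoeff b = 0) :
    psConj (substPair (complexify P) a b) = substPair (complexify P) (psConj a) (psConj b) := by
  have hconj : MvPowerSeries.map (starRingEnd ℂ) (complexify P) = complexify P := by
    rw [complexify, MvPowerSeries.map_map,
      show (starRingEnd ℂ).comp Complex.ofRealHom = Complex.ofRealHom from
        RingHom.ext Complex.conj_ofReal]
  rw [substPair_eq_subst _ ha hb, substPair_eq_subst _ (by simp [constantCoeff_psConj, ha])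
    (by simp [constantCoeff_psConj, hb]), psConj, PowerSeries.map,
    MvPowerSeries.map_subst (MvPowerSeries.hasSubst_of_constantCoeff_zero
      (Fin.forall_fin_two.mpr ⟨ha, hb⟩)), hconj]
  congr 1
  ext i : 1
  fin_cases i <;> rfl

theorem exists_map_ofReal_eq_of_psConj_eq {f : ℂ⟦X⟧} (hf : psConj f = f) :
    ∃ g : ℝ⟦X⟧, map Complex.ofRealHom g = f :=
  ⟨mk fun n => (coeff n f).re, by
    ext n
    rw [coeff_map, coeff_mk]
    exact Complex.conj_eq_iff_re.mp (by rw [← coeff_psConj, hf])⟩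

theorem constantCoeff_eq_zero_of_two_le_order {h : ℂ⟦X⟧} (hh : 2 ≤ h.order) :
    constantCoeff h = 0 := by
  rw [← coeff_zero_eq_constantCoeff_apply]
  exact coeff_of_lt_order 0 (lt_of_lt_of_le (by norm_num) hh)

theorem primitive_iff {x y : ℂ⟦X⟧} :
    Primitive x y ↔ ¬∃ x' y' h : ℂ⟦X⟧, 2 ≤ h.order ∧ x = subst h x' ∧ y = subst h y' := by
  refine not_congr (exists₃_congr fun x' y' h => and_congr_right fun hh => ?_)
  rw [substOne_eq_subst _ (constantCoeff_eq_zero_of_two_le_order hh),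
    substOne_eq_subst _ (constantCoeff_eq_zero_of_two_le_order hh)]

theorem Primitive.subst {x y φ : ℂ⟦X⟧} (hxy : Primitive x y) (hφ₀ : constantCoeff φ = 0)
    (hφ₁ : coeff 1 φ ≠ 0) : Primitive (subst φ x) (subst φ y) := by
  obtain ⟨ψ, hψ₀, -, hφψ, -⟩ := exists_subst_inverse hφ₀ hφ₁
  have hφ := HasSubst.of_constantCoeff_zero' hφ₀
  have hψ := HasSubst.of_constantCoeff_zero' hψ₀
  rw [primitive_iff] at hxy ⊢
  rintro ⟨x', y', h, hh, hx, hy⟩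
  have hh₀ := HasSubst.of_constantCoeff_zero' (constantCoeff_eq_zero_of_two_le_order hh)
  refine hxy ⟨x', y', PowerSeries.subst ψ h, hh.trans (le_order_subst_left' hψ₀), ?_, ?_⟩
  · rw [← subst_comp_subst_apply hh₀ hψ, ← hx, subst_subst_eq_self hφ hψ hφψ]
  · rw [← subst_comp_subst_apply hh₀ hψ, ← hy, subst_subst_eq_self hφ hψ hφψ]

theorem Primitive.psConj {x y : ℂ⟦X⟧} (hxy : Primitive x y) : Primitive (psConj x) (psConj y) := by
  rw [primitive_iff] at hxy ⊢
  rintro ⟨x', y', h, hh, hx, hy⟩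
  have hh₀ := HasSubst.of_constantCoeff_zero' (constantCoeff_eq_zero_of_two_le_order hh)
  refine hxy ⟨_root_.psConj x', _root_.psConj y', _root_.psConj h, hh.trans (le_order_map _),
    ?_, ?_⟩
  · rw [← psConj_subst hh₀, ← hx, psConj_involutive]
  · rw [← psConj_subst hh₀, ← hy, psConj_involutive]

theorem reparam_iff {γ δ : ℂ⟦X⟧ × ℂ⟦X⟧} :
    Reparam γ δ ↔ ∃ φ : ℂ⟦X⟧, constantCoeff φ = 0 ∧ coeff 1 φ ≠ 0 ∧
      δ.1 = subst φ γ.1 ∧ δ.2 = subst φ γ.2 := by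
  refine exists_congr fun φ => ?_
  rw [coeff_zero_eq_constantCoeff_apply]
  refine and_congr_right fun hφ₀ => and_congr_right fun _ => ?_
  rw [substOne_eq_subst _ hφ₀, substOne_eq_subst _ hφ₀]

theorem reparam_equivalence : Equivalence Reparam where
  refl γ := reparam_iff.mpr ⟨X, constantCoeff_X, by simp [coeff_X], (X_subst _).symm,
    (X_subst _).symm⟩
  symm {γ δ} h := by
    obtain ⟨φ, hφ₀, hφ₁, h₁, h₂⟩ := reparam_iff.mp h
    obtain ⟨ψ, hψ₀, hψ₁, hφψ, -⟩ := exists_subst_inverse hφ₀ hφ₁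
    have hφ := HasSubst.of_constantCoeff_zero' hφ₀
    have hψ := HasSubst.of_constantCoeff_zero' hψ₀
    exact reparam_iff.mpr ⟨ψ, hψ₀, hψ₁, by rw [h₁, subst_subst_eq_self hφ hψ hφψ],
      by rw [h₂, subst_subst_eq_self hφ hψ hφψ]⟩
  trans {γ δ ε} h h' := by
    obtain ⟨φ, hφ₀, hφ₁, h₁, h₂⟩ := reparam_iff.mp h
    obtain ⟨χ, hχ₀, hχ₁, h₁', h₂'⟩ := reparam_iff.mp h'
    have hφ := HasSubst.of_constantCoeff_zero' hφ₀
    have hχ := HasSubst.of_constantCoeff_zero' hχ₀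
    refine reparam_iff.mpr ⟨subst χ φ, ?_, ?_, ?_, ?_⟩
    · rw [constantCoeff_subst_of_constantCoeff_eq_zero hχ₀, hφ₀]
    · rw [coeff_one_subst_of_constantCoeff_eq_zero hχ₀]
      exact mul_ne_zero hφ₁ hχ₁
    · rw [h₁', h₁, subst_comp_subst_apply hφ hχ]
    · rw [h₂', h₂, subst_comp_subst_apply hφ hχ]

theorem Reparam.psConj {γ δ : ℂ⟦X⟧ × ℂ⟦X⟧} (h : Reparam γ δ) :
    Reparam (psConj γ.1, psConj γ.2) (psConj δ.1, psConj δ.2) := by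
  obtain ⟨φ, hφ₀, hφ₁, h₁, h₂⟩ := reparam_iff.mp h
  have hφ := HasSubst.of_constantCoeff_zero' hφ₀
  refine reparam_iff.mpr ⟨_root_.psConj φ, ?_, ?_, ?_, ?_⟩
  · rw [constantCoeff_psConj, hφ₀, map_zero]
  · rw [coeff_psConj]
    exact (map_ne_zero _).mpr hφ₁
  · rw [h₁, psConj_subst hφ]
  · rw [h₂, psConj_subst hφ]

namespace IsSepParam

theorem subst {P Q : MvPowerSeries (Fin 2) ℂ} {γ : ℂ⟦X⟧ × ℂ⟦X⟧} {φ : ℂ⟦X⟧}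
    (hγ : IsSepParam P Q γ) (hφ₀ : constantCoeff φ = 0) (hφ₁ : coeff 1 φ ≠ 0) :
    IsSepParam P Q (PowerSeries.subst φ γ.1, PowerSeries.subst φ γ.2) := by
  obtain ⟨ha, hb, hab, hprim, hsep⟩ := hγ
  rw [coeff_zero_eq_constantCoeff_apply] at ha hb
  rw [derivativeFun_eq_derivative, derivativeFun_eq_derivative] at hsep
  obtain ⟨ψ, hψ₀, -, hφψ, -⟩ := exists_subst_inverse hφ₀ hφ₁
  have hφ := HasSubst.of_constantCoeff_zero' hφ₀
  have hψ := HasSubst.of_constantCoeff_zero' hψ₀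
  refine ⟨?_, ?_, ?_, hprim.subst hφ₀ hφ₁, ?_⟩
  · rw [coeff_zero_eq_constantCoeff_apply, constantCoeff_subst_of_constantCoeff_eq_zero hφ₀, ha]
  · rw [coeff_zero_eq_constantCoeff_apply, constantCoeff_subst_of_constantCoeff_eq_zero hφ₀, hb]
  · rintro ⟨h₁, h₂⟩
    dsimp only at h₁ h₂
    refine hab ⟨?_, ?_⟩
    · rw [← subst_subst_eq_self hφ hψ hφψ (f := γ.1), h₁, zero_subst hψ]
    · rw [← subst_subst_eq_self hφ hψ hφψ (f := γ.2), h₂, zero_subst hψ]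
  · dsimp only
    rw [← substPair_subst P ha hb hφ₀, ← substPair_subst Q ha hb hφ₀, derivativeFun_eq_derivative,
      derivativeFun_eq_derivative, derivative_subst hφ, derivative_subst hφ]
    calc _ = PowerSeries.subst φ (substPair P γ.1 γ.2 * d⁄dX ℂ γ.2 -
          substPair Q γ.1 γ.2 * d⁄dX ℂ γ.1) * d⁄dX ℂ φ := by
          rw [subst_sub hφ, subst_mul hφ, subst_mul hφ]
          ring
      _ = 0 := by rw [hsep, zero_subst hφ, zero_mul]

theorem reparam {P Q : MvPowerSeries (Fin 2) ℂ} {γ δ : ℂ⟦X⟧ × ℂ⟦X⟧} (hγ : IsSepParam P Q γ)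
    (h : Reparam γ δ) : IsSepParam P Q δ := by
  obtain ⟨φ, hφ₀, hφ₁, h₁, h₂⟩ := reparam_iff.mp h
  rw [show δ = (PowerSeries.subst φ γ.1, PowerSeries.subst φ γ.2) from Prod.ext h₁ h₂]
  exact hγ.subst hφ₀ hφ₁

theorem psConj {P Q : MvPowerSeries (Fin 2) ℝ} {γ : ℂ⟦X⟧ × ℂ⟦X⟧}
    (hγ : IsSepParam (complexify P) (complexify Q) γ) :
    IsSepParam (complexify P) (complexify Q) (_root_.psConj γ.1, _root_.psConj γ.2) := by
  obtain ⟨ha, hb, hab, hprim, hsep⟩ := hγ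
  rw [coeff_zero_eq_constantCoeff_apply] at ha hb
  refine ⟨?_, ?_, ?_, hprim.psConj, ?_⟩
  · rw [coeff_zero_eq_constantCoeff_apply, constantCoeff_psConj, ha, map_zero]
  · rw [coeff_zero_eq_constantCoeff_apply, constantCoeff_psConj, hb, map_zero]
  · rintro ⟨h₁, h₂⟩
    exact hab ⟨psConj_involutive.injective (h₁.trans (map_zero _).symm),
      psConj_involutive.injective (h₂.trans (map_zero _).symm)⟩
  · dsimp only
    rw [← psConj_substPair_complexify P ha hb, ← psConj_substPair_complexify Q ha hb,
      derivativeFun_eq_derivative, derivativeFun_eq_derivative, ← psConj_derivative,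
      ← psConj_derivative]
    rw [derivativeFun_eq_derivative, derivativeFun_eq_derivative] at hsep
    simpa only [_root_.psConj, map_sub, map_mul, map_zero] using congrArg _root_.psConj hsep

end IsSepParam

theorem subst_psConj_subst_eq_X {g φ : ℂ⟦X⟧} (hg₀ : constantCoeff g = 0) (hg : g ≠ 0)
    (hφ₀ : constantCoeff φ = 0) (hgφ : subst φ (psConj g) = g) : subst φ (psConj φ) = X := by
  have hφ := HasSubst.of_constantCoeff_zero' hφ₀
  have hφ₀' : constantCoeff (psConj φ) = 0 := by rw [constantCoeff_psConj, hφ₀, map_zero]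
  set u := subst φ (psConj φ)
  have hu₀ : constantCoeff u = 0 := by
    rw [constantCoeff_subst_of_constantCoeff_eq_zero hφ₀, hφ₀']
  have hgu : subst u g = g := by
    have hg' : subst (psConj φ) g = psConj g := by
      conv_rhs => rw [← hgφ]
      rw [psConj_subst hφ, psConj_involutive]
    rw [← subst_comp_subst_apply (HasSubst.of_constantCoeff_zero' hφ₀') hφ, hg', hgφ]
  have hu₁ : coeff 1 u = (Complex.normSq (coeff 1 φ) : ℂ) := by
    rw [coeff_one_subst_of_constantCoeff_eq_zero hφ₀, coeff_psConj, Complex.normSq_eq_conj_mul_self]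
  have hm := order_toNat_ne_zero hg₀ hg
  have hnorm := coeff_one_pow_order_eq_one hu₀ hg hgu
  rw [hu₁, ← Complex.ofReal_pow, Complex.ofReal_eq_one,
    pow_eq_one_iff_of_nonneg (Complex.normSq_nonneg _) hm] at hnorm
  exact eq_X_of_subst_eq_self hu₀ (by rw [hu₁, hnorm, Complex.ofReal_one]) hg₀ hg hgu

theorem exists_add_conj_mul_ne_zero (z : ℂ) : ∃ c : ℂ, c + conj c * z ≠ 0 := by
  by_cases hz : z = -1
  · refine ⟨Complex.I, ?_⟩
    rw [hz, Complex.conj_I]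
    simp
  · exact ⟨1, by rw [map_one, one_mul, add_comm]; exact fun h => hz (eq_neg_of_add_eq_zero_left h)⟩

/-- Given the cocycle condition `φ̄ ∘ φ = X`, the series `w` is the inverse of the average
`v = c X + c̄ φ`, which satisfies `v̄ ∘ φ = v`. -/
theorem exists_psConj_eq_subst {φ : ℂ⟦X⟧} (hφ₀ : constantCoeff φ = 0)
    (hφφ : subst φ (psConj φ) = X) :
    ∃ w : ℂ⟦X⟧, constantCoeff w = 0 ∧ coeff 1 w ≠ 0 ∧ psConj w = subst w φ := by
  obtain ⟨c, hc⟩ := exists_add_conj_mul_ne_zero (coeff 1 φ)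
  set v := C c * X + C (conj c) * φ
  have hv₀ : constantCoeff v = 0 := by simp [v, hφ₀]
  have hv₁ : coeff 1 v ≠ 0 := by simpa [v, coeff_C_mul, coeff_X] using hc
  have hφ := HasSubst.of_constantCoeff_zero' hφ₀
  have hvφ : subst φ (psConj v) = v := by
    have hv : psConj v = C (conj c) * X + C c * psConj φ := by
      simp only [v, psConj, map_add, map_mul, map_C, map_X, Complex.conj_conj]
    rw [hv, subst_add hφ, subst_mul hφ, subst_mul hφ, subst_X hφ, hφφ, subst_C, subst_C]
    exact add_comm _ _
  obtain ⟨ψ, hψ₀, hψ₁, hvψ, hψv⟩ := exists_subst_inverse hv₀ hv₁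
  have hv := HasSubst.of_constantCoeff_zero' hv₀
  have hψ := HasSubst.of_constantCoeff_zero' hψ₀
  have hv₀' : constantCoeff (psConj v) = 0 := by rw [constantCoeff_psConj, hv₀, map_zero]
  have hv' := HasSubst.of_constantCoeff_zero' hv₀'
  refine ⟨ψ, hψ₀, hψ₁, ?_⟩
  calc psConj ψ = subst ψ (subst v (psConj ψ)) := by rw [subst_comp_subst_apply hv hψ, hvψ, X_subst]
    _ = subst ψ (subst φ (subst (psConj v) (psConj ψ))) := by
      rw [subst_comp_subst_apply hv' hφ, hvφ]
    _ = subst ψ φ := by rw [← psConj_subst hv, hψv, psConj_X, subst_X hφ]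

theorem exists_subst_psConj_eq_self {a b : ℂ⟦X⟧} (ha : constantCoeff a = 0)
    (hb : constantCoeff b = 0) (hab : ¬(a = 0 ∧ b = 0)) (h : Reparam (psConj a, psConj b) (a, b)) :
    ∃ w : ℂ⟦X⟧, constantCoeff w = 0 ∧ coeff 1 w ≠ 0 ∧
      psConj (subst w a) = subst w a ∧ psConj (subst w b) = subst w b := by
  obtain ⟨φ, hφ₀, -, h₁, h₂⟩ := reparam_iff.mp h
  have hφφ : subst φ (psConj φ) = X := by
    by_cases ha₀ : a = 0
    · exact subst_psConj_subst_eq_X hb (fun hb₀ => hab ⟨ha₀, hb₀⟩) hφ₀ h₂.symm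
    · exact subst_psConj_subst_eq_X ha ha₀ hφ₀ h₁.symm
  obtain ⟨w, hw₀, hw₁, hw⟩ := exists_psConj_eq_subst hφ₀ hφφ
  have hreal {g : ℂ⟦X⟧} (hg : g = subst φ (psConj g)) : psConj (subst w g) = subst w g := by
    rw [psConj_subst (HasSubst.of_constantCoeff_zero' hw₀), hw,
      ← subst_comp_subst_apply (HasSubst.of_constantCoeff_zero' hφ₀)
        (HasSubst.of_constantCoeff_zero' hw₀), ← hg]
  exact ⟨w, hw₀, hw₁, hreal h₁, hreal h₂⟩

abbrev SepBranch (P Q : MvPowerSeries (Fin 2) ℂ) : Type :=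
  Quot fun γ δ : {γ : ℂ⟦X⟧ × ℂ⟦X⟧ // IsSepParam P Q γ} => Reparam γ.1 δ.1

namespace SepBranch

noncomputable def conjugate (P Q : MvPowerSeries (Fin 2) ℝ) :
    SepBranch (complexify P) (complexify Q) → SepBranch (complexify P) (complexify Q) :=
  Quot.map (fun γ => ⟨(psConj γ.1.1, psConj γ.1.2), γ.2.psConj⟩) fun _ _ h => h.psConj

theorem conjugate_involutive (P Q : MvPowerSeries (Fin 2) ℝ) :
    Function.Involutive (conjugate P Q) := by
  rintro ⟨γ⟩
  exact congrArg (Quot.mk _) (Subtype.ext (by simp [psConj_involutive _]))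

theorem exists_real_of_conjugate_eq {P Q : MvPowerSeries (Fin 2) ℝ}
    {q : SepBranch (complexify P) (complexify Q)} (hq : conjugate P Q q = q) :
    ∃ a b : ℝ⟦X⟧, IsSepParam (complexify P) (complexify Q)
      (map Complex.ofRealHom a, map Complex.ofRealHom b) := by
  induction q using Quot.ind with
  | mk γ =>
    have h : Reparam (psConj γ.1.1, psConj γ.1.2) γ.1 :=
      ((reparam_equivalence.comap Subtype.val).eqvGen_iff).mp (Quot.eqvGen_exact hq)
    obtain ⟨ha, hb, hab, -, -⟩ := γ.2
    rw [coeff_zero_eq_constantCoeff_apply] at ha hb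
    obtain ⟨w, hw₀, hw₁, h₁, h₂⟩ := exists_subst_psConj_eq_self ha hb hab h
    obtain ⟨a, ha⟩ := exists_map_ofReal_eq_of_psConj_eq h₁
    obtain ⟨b, hb⟩ := exists_map_ofReal_eq_of_psConj_eq h₂
    exact ⟨a, b, ha ▸ hb ▸ γ.2.subst hw₀ hw₁⟩

end SepBranch

theorem odd_branches_real_separatrix_general (P Q : MvPowerSeries (Fin 2) ℝ)
    (hodd : Odd (Nat.card (Quot fun γ δ :
        {γ : PowerSeries ℂ × PowerSeries ℂ // IsSepParam (complexify P) (complexify Q) γ} =>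
      Reparam γ.1 δ.1))) :
    ∃ a b : PowerSeries ℝ,
      IsSepParam (complexify P) (complexify Q)
        (PowerSeries.map Complex.ofRealHom a, PowerSeries.map Complex.ofRealHom b) := by
  obtain ⟨q, hq⟩ := (SepBranch.conjugate_involutive P Q).exists_fixed_of_odd_card hodd
  exact SepBranch.exists_real_of_conjugate_eq hq

/-- let `P, Q ∈ ℝ[[x,y]]` and let `S` be the set of separatrix branches of
the complexification of `X = P ∂/∂x + Q ∂/∂y` (primitive separatrix parametrizations
modulo reparametrization by formal diffeomorphisms).  If `S` is finite of odd
cardinality, then `X` admits a real formal separatrix. -/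
theorem odd_branches_real_separatrix (P Q : MvPowerSeries (Fin 2) ℝ)
    (hfin : Finite (Quot fun γ δ :
        {γ : PowerSeries ℂ × PowerSeries ℂ // IsSepParam (complexify P) (complexify Q) γ} =>
      Reparam γ.1 δ.1))
    (hodd : Odd (Nat.card (Quot fun γ δ :
        {γ : PowerSeries ℂ × PowerSeries ℂ // IsSepParam (complexify P) (complexify Q) γ} =>
      Reparam γ.1 δ.1))) :
    ∃ a b : PowerSeries ℝ,
      IsSepParam (complexify P) (complexify Q)
        (PowerSeries.map Complex.ofRealHom a, PowerSeries.map Complex.ofRealHom b) :=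
  odd_branches_real_separatrix_general P Q hodd
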